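/- arXiv:1405.0735 — 2 statements merged into one kernel-verified Lean document; each statement's English description precedes it below -/
import Mathlib

section
/- (Theorem 3, stability of the SBP-FD junction for the advection equation, conforming grids) Suppose that in the SBP-FD junction semi-discretization of the advection equation the operators I_w^w, I_u^u, I_v^v are identity matrices, the interpolation compatibility relation holds (I^{w,u} = P_{x,w}^{-1}(I_w^u)^T P_{x,u} and I^{w,v} = P_{x,w}^{-1}(I_w^v)^T P_{x,v}), and the penalty parameters are chosen as τ_w = -a_2/2 and τ_{uv} = a_2/2. If w : [0,∞) → ℝ^{n_{x,w} n_{y,w}}, u : [0,∞) → ℝ^{n_{x,u} n_{y,u}}, v : [0,∞) → ℝ^{n_{x,v} n_{y,v}} are differentiable and satisfy the semi-discrete system for all t ≥ 0, then for every t ≥ 0 one has the energy conservation equality ‖w(t)‖²_{P_w} + ‖u(t)‖²_{P_u} + ‖v(t)‖²_{P_v} = ‖w(0)‖²_{P_w} + ‖u(0)‖²_{P_u} + ‖v(0)‖²_{P_v}. -/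
/-! The energy `‖w‖²_P + ‖u‖²_P + ‖v‖²_P` has zero time derivative. In each block the rate
`2 fᵀ (Pₓ ⊗ P_y) f'` is computed with the SBP property: the `x`-terms vanish since `Qₓ` is
skew, and the `y`-terms leave the boundary form `a₂ fᵀ (Pₓ ⊗ (Q_y + Q_yᵀ)) f`. The penalties
`τ_w = -a₂/2`, `τ_{uv} = a₂/2` cancel these boundary forms exactly and leave only the coupling
terms `∓ a₂ wᵀ (Iᵀ P ⊗ e₀ e_Nᵀ) u`; by the compatibility relation the coupling term in the
equation for `w` is the transpose of the one in the equation for `u` (resp. `v`), so they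
cancel too. -/

open Matrix
open scoped Kronecker

noncomputable section

/-- The first standard basis vector `e₀ = (1,0,…,0)ᵀ` of `ℝ^(l+1)`. -/
def e0v (l : ℕ) : Fin (l + 1) → ℝ := Pi.single 0 1

/-- The last standard basis vector `e_N = (0,…,0,1)ᵀ` of `ℝ^(l+1)`. -/
def eNv (l : ℕ) : Fin (l + 1) → ℝ := Pi.single (Fin.last l) 1

/-- The SBP energy `‖f‖²_P = fᵀ (Px ⊗ Py) f` of a real grid function. -/
def energyR {a b : Type*} [Fintype a] [Fintype b]
    (Px : Matrix a a ℝ) (Py : Matrix b b ℝ) (f : a × b → ℝ) : ℝ :=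
  dotProduct f ((Px ⊗ₖ Py).mulVec f)

section KroneckerForms

variable {R : Type*} [CommRing R] {l m n p : Type*}

theorem Matrix.kronecker_neg (A : Matrix l m R) (B : Matrix n p R) :
    A ⊗ₖ (-B) = -(A ⊗ₖ B) :=
  ext fun _ _ => mul_neg _ _

variable [Fintype l] [Fintype m] [Fintype n] [Fintype p]

theorem two_mul_dotProduct_mulVec_self (M : Matrix n n R) (x : n → R) :
    2 * (x ⬝ᵥ (M *ᵥ x)) = x ⬝ᵥ ((M + Mᵀ) *ᵥ x) := by
  rw [add_mulVec, dotProduct_add, dotProduct_transpose_mulVec, two_mul]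

theorem two_mul_dotProduct_kronecker_mulVec_self_of_isSymm_right (A : Matrix m m R)
    {B : Matrix n n R} (hB : B.IsSymm) (x : m × n → R) :
    2 * (x ⬝ᵥ ((A ⊗ₖ B) *ᵥ x)) = x ⬝ᵥ (((A + Aᵀ) ⊗ₖ B) *ᵥ x) := by
  conv_rhs => rw [← hB.eq, add_kronecker, kroneckerMap_transpose, hB.eq]
  exact two_mul_dotProduct_mulVec_self _ x

theorem two_mul_dotProduct_kronecker_mulVec_self_of_isSymm_left {A : Matrix m m R}
    (hA : A.IsSymm) (B : Matrix n n R) (x : m × n → R) :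
    2 * (x ⬝ᵥ ((A ⊗ₖ B) *ᵥ x)) = x ⬝ᵥ ((A ⊗ₖ (B + Bᵀ)) *ᵥ x) := by
  conv_rhs => rw [← hA.eq, kronecker_add, kroneckerMap_transpose, hA.eq]
  exact two_mul_dotProduct_mulVec_self _ x

theorem dotProduct_interface_coupling_comm {P : Matrix m m R} (hP : P.IsSymm)
    (I : Matrix m l R) (a : n → R) (b : p → R) (x : l × n → R) (y : m × p → R) :
    x ⬝ᵥ (((Iᵀ * P) ⊗ₖ vecMulVec a b) *ᵥ y) = y ⬝ᵥ (((P * I) ⊗ₖ vecMulVec b a) *ᵥ x) := by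
  rw [← dotProduct_transpose_mulVec, ← kroneckerMap_transpose, transpose_mul,
    transpose_transpose, hP.eq, transpose_vecMulVec]

theorem two_mul_dotProduct_kronecker_mulVec_sbp [DecidableEq m] [DecidableEq n]
    {Px Qx : Matrix m m R} {Py Qy : Matrix n n R} (hPx : Px.IsSymm) (hPy : Py.IsSymm)
    (hPx_det : IsUnit Px.det) (hPy_det : IsUnit Py.det) (hQx : Qx + Qxᵀ = 0)
    (a1 a2 τ : R) (f g : m × n → R) :
    2 * (f ⬝ᵥ ((Px ⊗ₖ Py) *ᵥ
        ((a1 • ((Px⁻¹ * Qx) ⊗ₖ (1 : Matrix n n R))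
            + a2 • ((1 : Matrix m m R) ⊗ₖ (Py⁻¹ * Qy))) *ᵥ f
          - τ • ((1 : Matrix m m R) ⊗ₖ Py⁻¹) *ᵥ g)))
      = a2 * (f ⬝ᵥ ((Px ⊗ₖ (Qy + Qyᵀ)) *ᵥ f)) - 2 * τ * (f ⬝ᵥ ((Px ⊗ₖ 1) *ᵥ g)) := by
  have hx := two_mul_dotProduct_kronecker_mulVec_self_of_isSymm_right Qx hPy f
  have hy := two_mul_dotProduct_kronecker_mulVec_self_of_isSymm_left hPx Qy f
  rw [hQx, zero_kronecker, zero_mulVec, dotProduct_zero] at hx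
  simp only [mulVec_sub, mulVec_add, add_mulVec, smul_mulVec, mulVec_smul, mulVec_mulVec,
    ← mul_kronecker_mul, mul_nonsing_inv_cancel_left (h := hPx_det),
    mul_nonsing_inv_cancel_left (h := hPy_det), mul_nonsing_inv _ hPy_det, mul_one,
    dotProduct_sub, dotProduct_add, dotProduct_smul, smul_eq_mul]
  linear_combination a1 * hx + a2 * hy

end KroneckerForms

section Calculus

variable {𝕜 : Type*} [NontriviallyNormedField 𝕜] {m n : Type*} [Fintype n]
  {f g : 𝕜 → n → 𝕜} {f' g' : n → 𝕜} {t : 𝕜}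

theorem HasDerivAt.dotProduct (hf : HasDerivAt f f' t) (hg : HasDerivAt g g' t) :
    HasDerivAt (fun s => f s ⬝ᵥ g s) (f' ⬝ᵥ g t + f t ⬝ᵥ g') t := by
  unfold _root_.dotProduct
  rw [← Finset.sum_add_distrib]
  exact HasDerivAt.fun_sum fun i _ => (hasDerivAt_pi.1 hf i).mul (hasDerivAt_pi.1 hg i)

theorem HasDerivAt.mulVec (M : Matrix m n 𝕜) (hf : HasDerivAt f f' t) :
    HasDerivAt (fun s => M *ᵥ f s) (M *ᵥ f') t :=
  hasDerivAt_pi.2 fun i => by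
    have h := (hasDerivAt_const t (M i)).dotProduct hf
    rw [zero_dotProduct, zero_add] at h
    exact h

end Calculus

theorem hasDerivAt_energyR {a b : Type*} [Fintype a] [Fintype b] {Px : Matrix a a ℝ}
    {Py : Matrix b b ℝ} (hPx : Px.IsSymm) (hPy : Py.IsSymm) {f : ℝ → a × b → ℝ}
    {f' : a × b → ℝ} {t : ℝ} (hf : HasDerivAt f f' t) :
    HasDerivAt (fun s => energyR Px Py (f s)) (2 * (f t ⬝ᵥ ((Px ⊗ₖ Py) *ᵥ f'))) t := by
  have hP : (Px ⊗ₖ Py)ᵀ = Px ⊗ₖ Py := by rw [← kroneckerMap_transpose, hPx.eq, hPy.eq]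
  refine (hf.dotProduct (hf.mulVec (Px ⊗ₖ Py))).congr_deriv ?_
  rw [← dotProduct_transpose_mulVec, hP, two_mul]

theorem eq_apply_zero_of_hasDerivAt_zero {E : Type*} [NormedAddCommGroup E] [NormedSpace ℝ E]
    {f : ℝ → E} (hf : ∀ t, 0 ≤ t → HasDerivAt f 0 t) : ∀ t, 0 ≤ t → f t = f 0 := fun t ht =>
  constant_of_has_deriv_right_zero
    (fun s hs => (hf s hs.1).continuousAt.continuousWithinAt)
    (fun s hs => (hf s hs.1).hasDerivWithinAt) t ⟨ht, le_rfl⟩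

/-- (Theorem 3: stability of the SBP-FD junction for the advection equation,
conforming grids.) With identity operators `I_w^w, I_u^u, I_v^v`, the interpolation
compatibility relation, and penalty parameters `τ_w = -a₂/2`, `τ_{uv} = a₂/2`, every
solution of the SBP-FD junction semi-discretization of `U_t = a₁ U_x + a₂ U_y`
conserves the discrete energy. -/
theorem sbp_fd_junction_advection_conforming_stability
    (kw lw ku lu kv lv : ℕ) (a1 a2 : ℝ)
    (Pxw : Matrix (Fin (kw + 1)) (Fin (kw + 1)) ℝ)
    (Pyw : Matrix (Fin (lw + 1)) (Fin (lw + 1)) ℝ)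
    (Pxu : Matrix (Fin (ku + 1)) (Fin (ku + 1)) ℝ)
    (Pyu : Matrix (Fin (lu + 1)) (Fin (lu + 1)) ℝ)
    (Pxv : Matrix (Fin (kv + 1)) (Fin (kv + 1)) ℝ)
    (Pyv : Matrix (Fin (lv + 1)) (Fin (lv + 1)) ℝ)
    (hPxw : Pxw.IsDiag) (hPxwP : Pxw.PosDef)
    (hPyw : Pyw.IsDiag) (hPywP : Pyw.PosDef)
    (hPxu : Pxu.IsDiag) (hPxuP : Pxu.PosDef)
    (hPyu : Pyu.IsDiag) (hPyuP : Pyu.PosDef)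
    (hPxv : Pxv.IsDiag) (hPxvP : Pxv.PosDef)
    (hPyv : Pyv.IsDiag) (hPyvP : Pyv.PosDef)
    (Qxw : Matrix (Fin (kw + 1)) (Fin (kw + 1)) ℝ)
    (Qyw : Matrix (Fin (lw + 1)) (Fin (lw + 1)) ℝ)
    (Qxu : Matrix (Fin (ku + 1)) (Fin (ku + 1)) ℝ)
    (Qyu : Matrix (Fin (lu + 1)) (Fin (lu + 1)) ℝ)
    (Qxv : Matrix (Fin (kv + 1)) (Fin (kv + 1)) ℝ)
    (Qyv : Matrix (Fin (lv + 1)) (Fin (lv + 1)) ℝ)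
    (hQxw : Qxw + Qxwᵀ = 0) (hQxu : Qxu + Qxuᵀ = 0) (hQxv : Qxv + Qxvᵀ = 0)
    (hQyw : Qyw + Qywᵀ = -vecMulVec (e0v lw) (e0v lw))
    (hQyu : Qyu + Qyuᵀ = vecMulVec (eNv lu) (eNv lu))
    (hQyv : Qyv + Qyvᵀ = vecMulVec (eNv lv) (eNv lv))
    (Iww : Matrix (Fin (kw + 1)) (Fin (kw + 1)) ℝ)
    (Iuu : Matrix (Fin (ku + 1)) (Fin (ku + 1)) ℝ)
    (Ivv : Matrix (Fin (kv + 1)) (Fin (kv + 1)) ℝ)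
    (hIww : Iww = 1) (hIuu : Iuu = 1) (hIvv : Ivv = 1)
    (Iwu : Matrix (Fin (ku + 1)) (Fin (kw + 1)) ℝ)
    (Iwv : Matrix (Fin (kv + 1)) (Fin (kw + 1)) ℝ)
    (Iwu' : Matrix (Fin (kw + 1)) (Fin (ku + 1)) ℝ)
    (Iwv' : Matrix (Fin (kw + 1)) (Fin (kv + 1)) ℝ)
    (hIwu' : Iwu' = Pxw⁻¹ * Iwuᵀ * Pxu)
    (hIwv' : Iwv' = Pxw⁻¹ * Iwvᵀ * Pxv)
    (τw τuv : ℝ) (hτw : τw = -a2 / 2) (hτuv : τuv = a2 / 2)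
    (w : ℝ → (Fin (kw + 1) × Fin (lw + 1) → ℝ))
    (u : ℝ → (Fin (ku + 1) × Fin (lu + 1) → ℝ))
    (v : ℝ → (Fin (kv + 1) × Fin (lv + 1) → ℝ))
    (hw : ∀ t : ℝ, 0 ≤ t → HasDerivAt w
      ((a1 • ((Pxw⁻¹ * Qxw) ⊗ₖ (1 : Matrix (Fin (lw + 1)) (Fin (lw + 1)) ℝ))
          + a2 • ((1 : Matrix (Fin (kw + 1)) (Fin (kw + 1)) ℝ) ⊗ₖ (Pyw⁻¹ * Qyw))).mulVec (w t)
        - τw • ((1 : Matrix (Fin (kw + 1)) (Fin (kw + 1)) ℝ) ⊗ₖ Pyw⁻¹).mulVec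
            ((Iww ⊗ₖ vecMulVec (e0v lw) (e0v lw)).mulVec (w t)
              - (Iwu' ⊗ₖ vecMulVec (e0v lw) (eNv lu)).mulVec (u t)
              - (Iwv' ⊗ₖ vecMulVec (e0v lw) (eNv lv)).mulVec (v t))) t)
    (hu : ∀ t : ℝ, 0 ≤ t → HasDerivAt u
      ((a1 • ((Pxu⁻¹ * Qxu) ⊗ₖ (1 : Matrix (Fin (lu + 1)) (Fin (lu + 1)) ℝ))
          + a2 • ((1 : Matrix (Fin (ku + 1)) (Fin (ku + 1)) ℝ) ⊗ₖ (Pyu⁻¹ * Qyu))).mulVec (u t)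
        - τuv • ((1 : Matrix (Fin (ku + 1)) (Fin (ku + 1)) ℝ) ⊗ₖ Pyu⁻¹).mulVec
            ((Iuu ⊗ₖ vecMulVec (eNv lu) (eNv lu)).mulVec (u t)
              - (Iwu ⊗ₖ vecMulVec (eNv lu) (e0v lw)).mulVec (w t))) t)
    (hv : ∀ t : ℝ, 0 ≤ t → HasDerivAt v
      ((a1 • ((Pxv⁻¹ * Qxv) ⊗ₖ (1 : Matrix (Fin (lv + 1)) (Fin (lv + 1)) ℝ))
          + a2 • ((1 : Matrix (Fin (kv + 1)) (Fin (kv + 1)) ℝ) ⊗ₖ (Pyv⁻¹ * Qyv))).mulVec (v t)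
        - τuv • ((1 : Matrix (Fin (kv + 1)) (Fin (kv + 1)) ℝ) ⊗ₖ Pyv⁻¹).mulVec
            ((Ivv ⊗ₖ vecMulVec (eNv lv) (eNv lv)).mulVec (v t)
              - (Iwv ⊗ₖ vecMulVec (eNv lv) (e0v lw)).mulVec (w t))) t) :
    ∀ t : ℝ, 0 ≤ t →
      energyR Pxw Pyw (w t) + energyR Pxu Pyu (u t) + energyR Pxv Pyv (v t)
        = energyR Pxw Pyw (w 0) + energyR Pxu Pyu (u 0) + energyR Pxv Pyv (v 0) := by
  subst hIww hIuu hIvv hIwu' hIwv' hτw hτuv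
  have hDet : ∀ {k} {P : Matrix (Fin k) (Fin k) ℝ}, P.PosDef → IsUnit P.det :=
    fun hP => hP.det_pos.ne'.isUnit
  have hE : ∀ s, 0 ≤ s → HasDerivAt
      (fun r => energyR Pxw Pyw (w r) + energyR Pxu Pyu (u r) + energyR Pxv Pyv (v r)) 0 s := by
    intro s hs
    refine (((hasDerivAt_energyR hPxw.isSymm hPyw.isSymm (hw s hs)).add
      (hasDerivAt_energyR hPxu.isSymm hPyu.isSymm (hu s hs))).add
      (hasDerivAt_energyR hPxv.isSymm hPyv.isSymm (hv s hs))).congr_deriv ?_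
    rw [two_mul_dotProduct_kronecker_mulVec_sbp hPxw.isSymm hPyw.isSymm (hDet hPxwP)
        (hDet hPywP) hQxw,
      two_mul_dotProduct_kronecker_mulVec_sbp hPxu.isSymm hPyu.isSymm (hDet hPxuP)
        (hDet hPyuP) hQxu,
      two_mul_dotProduct_kronecker_mulVec_sbp hPxv.isSymm hPyv.isSymm (hDet hPxvP)
        (hDet hPyvP) hQxv,
      hQyw, hQyu, hQyv]
    simp only [mulVec_sub, mulVec_mulVec, ← mul_kronecker_mul, Matrix.mul_one, Matrix.one_mul,
      Matrix.mul_assoc, mul_nonsing_inv_cancel_left (h := hDet hPxwP), kronecker_neg, neg_mulVec,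
      dotProduct_sub, dotProduct_neg]
    rw [dotProduct_interface_coupling_comm hPxu.isSymm,
      dotProduct_interface_coupling_comm hPxv.isSymm]
    ring
  exact eq_apply_zero_of_hasDerivAt_zero hE

end
end

section
/- (Skew-symmetry of the advection junction system matrix in the SBP norm) Suppose that in the SBP-FD junction semi-discretization of the advection equation the operators I_w^w, I_u^u, I_v^v are identity matrices, the interpolation compatibility relation holds (I^{w,u} = P_{x,w}^{-1}(I_w^u)^T P_{x,u} and I^{w,v} = P_{x,w}^{-1}(I_w^v)^T P_{x,v}), and τ_w = -a_2/2, τ_{uv} = a_2/2. Let L be the system matrix of the semi-discretization acting on stacked vectors z = (w; u; v), i.e. the block matrix with diagonal blocks L_{ww} = a_1 D_{x,w}⊗I_{y,w} + a_2 I_{x,w}⊗D_{y,w} − τ_w I_{x,w}⊗(P_{y,w}^{-1} e_{0,w} e_{0,w}^T), L_{uu} = a_1 D_{x,u}⊗I_{y,u} + a_2 I_{x,u}⊗D_{y,u} − τ_{uv} I_{x,u}⊗(P_{y,u}^{-1} e_{N,u} e_{N,u}^T), L_{vv} = a_1 D_{x,v}⊗I_{y,v} + a_2 I_{x,v}⊗D_{y,v}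 − τ_{uv} I_{x,v}⊗(P_{y,v}^{-1} e_{N,v} e_{N,v}^T), off-diagonal blocks L_{wu} = τ_w I^{w,u}⊗(P_{y,w}^{-1} e_{0,w} e_{N,u}^T), L_{wv} = τ_w I^{w,v}⊗(P_{y,w}^{-1} e_{0,w} e_{N,v}^T), L_{uw} = τ_{uv} I_w^u⊗(P_{y,u}^{-1} e_{N,u} e_{0,w}^T), L_{vw} = τ_{uv} I_w^v⊗(P_{y,v}^{-1} e_{N,v} e_{0,w}^T), and L_{uv} = L_{vu} = 0. Let 𝒫 be the block-diagonal matrix with blocks P_{x,w}⊗P_{y,w}, P_{x,u}⊗P_{y,u}, P_{x,v}⊗P_{y,v}. Then 𝒫L + L^T𝒫 = 0; in particular L is skew-symmetric with respect to the inner product induced by 𝒫. -/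
open Matrix
open scoped Kronecker

noncomputable section

/-! Since `𝒫` is symmetric, `𝒫 L + Lᵀ 𝒫 = M + Mᵀ` with `M = 𝒫 L`, and skew-symmetry of `M` can be
checked block by block. On a diagonal block the SBP property turns `(P_x ⊗ P_y)(D_x ⊗ I)` and
`(P_x ⊗ P_y)(I ⊗ D_y)` into `Q_x ⊗ P_y` and `P_x ⊗ Q_y`; the outer boundaries contribute nothing and
`Q_y + Q_yᵀ = ±e eᵀ` leaves only the interface term, which the penalty `τ` cancels exactly. The
coupling blocks cancel in pairs, because the compatibility relation makes `𝒫_w L_wu` the transpose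
of `𝒫_u L_uw` up to the factor `τ_w / τ_uv = -1`. -/

namespace Matrix

theorem PosDef.isUnit_det {K n : Type*} [Field K] [PartialOrder K] [StarRing K] [Fintype n]
    [DecidableEq n] {A : Matrix n n K} (hA : A.PosDef) : IsUnit A.det :=
  (isUnit_iff_isUnit_det A).mp hA.isUnit

theorem PosDef.transpose_eq_self {R n : Type*} [Ring R] [PartialOrder R] [StarRing R]
    [TrivialStar R] [Fintype n] {A : Matrix n n R} (hA : A.PosDef) : Aᵀ = A :=
  (isHermitian_iff_isSymm.mp hA.isHermitian).eq

variable {R : Type*} [CommRing R] {l m n o : Type*}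

theorem transpose_kronecker (A : Matrix l m R) (B : Matrix n o R) : (A ⊗ₖ B)ᵀ = Aᵀ ⊗ₖ Bᵀ :=
  (kroneckerMap_transpose _ _ _).symm

theorem fromBlocks_add_transpose_eq_zero {A : Matrix l l R} {B : Matrix l m R}
    {C : Matrix m l R} {D : Matrix m m R} (hA : A + Aᵀ = 0) (hBC : B + Cᵀ = 0)
    (hD : D + Dᵀ = 0) : fromBlocks A B C D + (fromBlocks A B C D)ᵀ = 0 := by
  have hCB : C + Bᵀ = 0 := by
    simpa [add_comm] using congrArg transpose hBC
  rw [fromBlocks_transpose, fromBlocks_add, hA, hBC, hCB, hD, fromBlocks_zero]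

theorem fromCols_add_transpose_fromRows_eq_zero {A : Matrix l m R} {B : Matrix l n R}
    {C : Matrix m l R} {D : Matrix n l R} (hAC : A + Cᵀ = 0) (hBD : B + Dᵀ = 0) :
    fromCols A B + (fromRows C D)ᵀ = 0 := by
  ext i (j | j)
  · simpa using congrFun (congrFun hAC i) j
  · simpa using congrFun (congrFun hBD i) j

variable [Fintype l] [Fintype m]

theorem fromBlocks_zero_zero_mul_fromBlocks (P : Matrix l l R) (Q : Matrix m m R)
    (A : Matrix l n R) (B : Matrix l o R) (C : Matrix m n R) (D : Matrix m o R) :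
    fromBlocks P 0 0 Q * fromBlocks A B C D = fromBlocks (P * A) (P * B) (Q * C) (Q * D) := by
  simp [fromBlocks_multiply]

end Matrix

section SBP

variable {R : Type*} [CommRing R] {l m n o : Type*} [Fintype l] [Fintype m] [Fintype n]
  [Fintype o] [DecidableEq l] [DecidableEq m] [DecidableEq o]

theorem kronecker_mul_interface_add_transpose_eq_zero {τ₁ τ₂ : R} {Px₁ : Matrix l l R}
    {Py₁ : Matrix m m R} {Px₂ : Matrix n n R} {Py₂ : Matrix o o R} {I : Matrix n l R}
    {B : Matrix m o R} (hPx₁ : IsUnit Px₁.det) (hPy₁ : IsUnit Py₁.det) (hPy₂ : IsUnit Py₂.det)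
    (hPx₂T : Px₂ᵀ = Px₂) (hτ : τ₁ + τ₂ = 0) :
    (Px₁ ⊗ₖ Py₁) * (τ₁ • ((Px₁⁻¹ * Iᵀ * Px₂) ⊗ₖ (Py₁⁻¹ * B)))
      + ((Px₂ ⊗ₖ Py₂) * (τ₂ • (I ⊗ₖ (Py₂⁻¹ * Bᵀ))))ᵀ = 0 := by
  simp only [Matrix.mul_smul, ← mul_kronecker_mul, Matrix.mul_assoc,
    mul_nonsing_inv_cancel_left _ _ hPx₁, mul_nonsing_inv_cancel_left _ _ hPy₁,
    mul_nonsing_inv_cancel_left _ _ hPy₂, transpose_smul, transpose_kronecker, transpose_mul,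
    transpose_transpose, hPx₂T]
  rw [← add_smul, hτ, zero_smul]

variable [DecidableEq n]

/-- The diagonal blocks `L_ww`, `L_uu`, `L_vv`, where `E = e eᵀ` is the interface penalty matrix. -/
def advectionDiagBlock (a₁ a₂ τ : R) (Px Qx : Matrix m m R) (Py Qy E : Matrix n n R) :
    Matrix (m × n) (m × n) R :=
  a₁ • ((Px⁻¹ * Qx) ⊗ₖ (1 : Matrix n n R)) + a₂ • ((1 : Matrix m m R) ⊗ₖ (Py⁻¹ * Qy))
    - τ • ((1 : Matrix m m R) ⊗ₖ (Py⁻¹ * E))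

theorem kronecker_mul_advectionDiagBlock (a₁ a₂ τ : R) {Px Qx : Matrix m m R}
    {Py Qy E : Matrix n n R} (hPx : IsUnit Px.det) (hPy : IsUnit Py.det) :
    (Px ⊗ₖ Py) * advectionDiagBlock a₁ a₂ τ Px Qx Py Qy E
      = a₁ • (Qx ⊗ₖ Py) + a₂ • (Px ⊗ₖ Qy) - τ • (Px ⊗ₖ E) := by
  simp only [advectionDiagBlock, mul_add, mul_sub, Matrix.mul_smul, ← mul_kronecker_mul,
    Matrix.mul_one, mul_nonsing_inv_cancel_left _ _ hPx, mul_nonsing_inv_cancel_left _ _ hPy]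

theorem kronecker_mul_advectionDiagBlock_add_transpose_eq_zero {a₁ a₂ τ s : R}
    {Px Qx : Matrix m m R} {Py Qy E : Matrix n n R} (hPx : IsUnit Px.det) (hPy : IsUnit Py.det)
    (hPxT : Pxᵀ = Px) (hPyT : Pyᵀ = Py) (hET : Eᵀ = E) (hQx : Qx + Qxᵀ = 0)
    (hQy : Qy + Qyᵀ = s • E) (hτ : τ + τ = a₂ * s) :
    (Px ⊗ₖ Py) * advectionDiagBlock a₁ a₂ τ Px Qx Py Qy E
      + ((Px ⊗ₖ Py) * advectionDiagBlock a₁ a₂ τ Px Qx Py Qy E)ᵀ = 0 := by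
  rw [kronecker_mul_advectionDiagBlock a₁ a₂ τ hPx hPy]
  simp only [transpose_sub, transpose_add, transpose_smul, transpose_kronecker, hPxT, hPyT, hET]
  calc _ = a₁ • ((Qx + Qxᵀ) ⊗ₖ Py) + a₂ • (Px ⊗ₖ (Qy + Qyᵀ)) - (τ + τ) • (Px ⊗ₖ E) := by
        simp only [add_kronecker, kronecker_add]
        module
    _ = 0 := by
        rw [hQx, hQy, hτ, zero_kronecker, kronecker_smul, smul_smul, smul_zero, zero_add,
          sub_self]

end SBP

theorem sbp_fd_junction_advection_skew_symmetry_general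
    (kw lw ku lu kv lv : ℕ) (a1 a2 : ℝ)
    (Pxw : Matrix (Fin (kw + 1)) (Fin (kw + 1)) ℝ)
    (Pyw : Matrix (Fin (lw + 1)) (Fin (lw + 1)) ℝ)
    (Pxu : Matrix (Fin (ku + 1)) (Fin (ku + 1)) ℝ)
    (Pyu : Matrix (Fin (lu + 1)) (Fin (lu + 1)) ℝ)
    (Pxv : Matrix (Fin (kv + 1)) (Fin (kv + 1)) ℝ)
    (Pyv : Matrix (Fin (lv + 1)) (Fin (lv + 1)) ℝ)
    (hPxwP : Pxw.PosDef)
    (hPywP : Pyw.PosDef)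
    (hPxuP : Pxu.PosDef)
    (hPyuP : Pyu.PosDef)
    (hPxvP : Pxv.PosDef)
    (hPyvP : Pyv.PosDef)
    (Qxw : Matrix (Fin (kw + 1)) (Fin (kw + 1)) ℝ)
    (Qyw : Matrix (Fin (lw + 1)) (Fin (lw + 1)) ℝ)
    (Qxu : Matrix (Fin (ku + 1)) (Fin (ku + 1)) ℝ)
    (Qyu : Matrix (Fin (lu + 1)) (Fin (lu + 1)) ℝ)
    (Qxv : Matrix (Fin (kv + 1)) (Fin (kv + 1)) ℝ)
    (Qyv : Matrix (Fin (lv + 1)) (Fin (lv + 1)) ℝ)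
    (hQxw : Qxw + Qxwᵀ = 0) (hQxu : Qxu + Qxuᵀ = 0) (hQxv : Qxv + Qxvᵀ = 0)
    (hQyw : Qyw + Qywᵀ = -vecMulVec (e0v lw) (e0v lw))
    (hQyu : Qyu + Qyuᵀ = vecMulVec (eNv lu) (eNv lu))
    (hQyv : Qyv + Qyvᵀ = vecMulVec (eNv lv) (eNv lv))
    (Iwu : Matrix (Fin (ku + 1)) (Fin (kw + 1)) ℝ)
    (Iwv : Matrix (Fin (kv + 1)) (Fin (kw + 1)) ℝ)
    (Iwu' : Matrix (Fin (kw + 1)) (Fin (ku + 1)) ℝ)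
    (Iwv' : Matrix (Fin (kw + 1)) (Fin (kv + 1)) ℝ)
    (hIwu' : Iwu' = Pxw⁻¹ * Iwuᵀ * Pxu)
    (hIwv' : Iwv' = Pxw⁻¹ * Iwvᵀ * Pxv)
    (τw τuv : ℝ) (hτw : τw = -a2 / 2) (hτuv : τuv = a2 / 2) :
    let Lww := a1 • ((Pxw⁻¹ * Qxw) ⊗ₖ (1 : Matrix (Fin (lw + 1)) (Fin (lw + 1)) ℝ))
      + a2 • ((1 : Matrix (Fin (kw + 1)) (Fin (kw + 1)) ℝ) ⊗ₖ (Pyw⁻¹ * Qyw))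
      - τw • ((1 : Matrix (Fin (kw + 1)) (Fin (kw + 1)) ℝ)
          ⊗ₖ (Pyw⁻¹ * vecMulVec (e0v lw) (e0v lw)))
    let Luu := a1 • ((Pxu⁻¹ * Qxu) ⊗ₖ (1 : Matrix (Fin (lu + 1)) (Fin (lu + 1)) ℝ))
      + a2 • ((1 : Matrix (Fin (ku + 1)) (Fin (ku + 1)) ℝ) ⊗ₖ (Pyu⁻¹ * Qyu))
      - τuv • ((1 : Matrix (Fin (ku + 1)) (Fin (ku + 1)) ℝ)
          ⊗ₖ (Pyu⁻¹ * vecMulVec (eNv lu) (eNv lu)))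
    let Lvv := a1 • ((Pxv⁻¹ * Qxv) ⊗ₖ (1 : Matrix (Fin (lv + 1)) (Fin (lv + 1)) ℝ))
      + a2 • ((1 : Matrix (Fin (kv + 1)) (Fin (kv + 1)) ℝ) ⊗ₖ (Pyv⁻¹ * Qyv))
      - τuv • ((1 : Matrix (Fin (kv + 1)) (Fin (kv + 1)) ℝ)
          ⊗ₖ (Pyv⁻¹ * vecMulVec (eNv lv) (eNv lv)))
    let Lwu := τw • (Iwu' ⊗ₖ (Pyw⁻¹ * vecMulVec (e0v lw) (eNv lu)))
    let Lwv := τw • (Iwv' ⊗ₖ (Pyw⁻¹ * vecMulVec (e0v lw) (eNv lv)))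
    let Luw := τuv • (Iwu ⊗ₖ (Pyu⁻¹ * vecMulVec (eNv lu) (e0v lw)))
    let Lvw := τuv • (Iwv ⊗ₖ (Pyv⁻¹ * vecMulVec (eNv lv) (e0v lw)))
    let L := Matrix.fromBlocks Lww (Matrix.fromCols Lwu Lwv)
      (Matrix.fromRows Luw Lvw) (Matrix.fromBlocks Luu 0 0 Lvv)
    let P := Matrix.fromBlocks (Pxw ⊗ₖ Pyw) 0 0
      (Matrix.fromBlocks (Pxu ⊗ₖ Pyu) 0 0 (Pxv ⊗ₖ Pyv))
    P * L + Lᵀ * P = 0 := by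
  intro Lww Luu Lvv Lwu Lwv Luw Lvw L P
  subst hIwu' hIwv'
  have hPT : Pᵀ = P := by
    simp only [P, fromBlocks_transpose, transpose_zero, transpose_kronecker,
      hPxwP.transpose_eq_self, hPywP.transpose_eq_self, hPxuP.transpose_eq_self,
      hPyuP.transpose_eq_self, hPxvP.transpose_eq_self, hPyvP.transpose_eq_self]
  have hτ : τw + τuv = 0 := by rw [hτw, hτuv]; ring
  rw [show Lᵀ * P = (P * L)ᵀ by rw [transpose_mul, hPT]]
  simp only [P, L, fromBlocks_zero_zero_mul_fromBlocks, mul_fromCols, fromBlocks_mul_fromRows,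
    Matrix.zero_mul, add_zero, zero_add]
  refine fromBlocks_add_transpose_eq_zero ?_ (fromCols_add_transpose_fromRows_eq_zero ?_ ?_)
    (fromBlocks_add_transpose_eq_zero ?_ (by simp) ?_)
  · exact kronecker_mul_advectionDiagBlock_add_transpose_eq_zero (s := -1)
      hPxwP.isUnit_det hPywP.isUnit_det hPxwP.transpose_eq_self hPywP.transpose_eq_self
      (transpose_vecMulVec _ _) hQxw (by rw [hQyw, neg_one_smul]) (by rw [hτw]; ring)
  · simpa only [transpose_vecMulVec] using kronecker_mul_interface_add_transpose_eq_zero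
      (I := Iwu) (B := vecMulVec (e0v lw) (eNv lu)) hPxwP.isUnit_det hPywP.isUnit_det
      hPyuP.isUnit_det hPxuP.transpose_eq_self hτ
  · simpa only [transpose_vecMulVec] using kronecker_mul_interface_add_transpose_eq_zero
      (I := Iwv) (B := vecMulVec (e0v lw) (eNv lv)) hPxwP.isUnit_det hPywP.isUnit_det
      hPyvP.isUnit_det hPxvP.transpose_eq_self hτ
  · exact kronecker_mul_advectionDiagBlock_add_transpose_eq_zero (s := 1)
      hPxuP.isUnit_det hPyuP.isUnit_det hPxuP.transpose_eq_self hPyuP.transpose_eq_self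
      (transpose_vecMulVec _ _) hQxu (by rw [hQyu, one_smul]) (by rw [hτuv]; ring)
  · exact kronecker_mul_advectionDiagBlock_add_transpose_eq_zero (s := 1)
      hPxvP.isUnit_det hPyvP.isUnit_det hPxvP.transpose_eq_self hPyvP.transpose_eq_self
      (transpose_vecMulVec _ _) hQxv (by rw [hQyv, one_smul]) (by rw [hτuv]; ring)

/-- (Skew-symmetry of the advection junction system matrix in the SBP norm.)
With identity operators `I_w^w, I_u^u, I_v^v`, the interpolation compatibility relation,
and penalty parameters `τ_w = -a₂/2`, `τ_{uv} = a₂/2`, the system matrix `L` of the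
SBP-FD junction semi-discretization of the advection equation satisfies
`𝒫 L + Lᵀ 𝒫 = 0`, where `𝒫` is the block-diagonal SBP norm matrix. -/
theorem sbp_fd_junction_advection_skew_symmetry
    (kw lw ku lu kv lv : ℕ) (a1 a2 : ℝ)
    (Pxw : Matrix (Fin (kw + 1)) (Fin (kw + 1)) ℝ)
    (Pyw : Matrix (Fin (lw + 1)) (Fin (lw + 1)) ℝ)
    (Pxu : Matrix (Fin (ku + 1)) (Fin (ku + 1)) ℝ)
    (Pyu : Matrix (Fin (lu + 1)) (Fin (lu + 1)) ℝ)
    (Pxv : Matrix (Fin (kv + 1)) (Fin (kv + 1)) ℝ)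
    (Pyv : Matrix (Fin (lv + 1)) (Fin (lv + 1)) ℝ)
    (hPxw : Pxw.IsDiag) (hPxwP : Pxw.PosDef)
    (hPyw : Pyw.IsDiag) (hPywP : Pyw.PosDef)
    (hPxu : Pxu.IsDiag) (hPxuP : Pxu.PosDef)
    (hPyu : Pyu.IsDiag) (hPyuP : Pyu.PosDef)
    (hPxv : Pxv.IsDiag) (hPxvP : Pxv.PosDef)
    (hPyv : Pyv.IsDiag) (hPyvP : Pyv.PosDef)
    (Qxw : Matrix (Fin (kw + 1)) (Fin (kw + 1)) ℝ)
    (Qyw : Matrix (Fin (lw + 1)) (Fin (lw + 1)) ℝ)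
    (Qxu : Matrix (Fin (ku + 1)) (Fin (ku + 1)) ℝ)
    (Qyu : Matrix (Fin (lu + 1)) (Fin (lu + 1)) ℝ)
    (Qxv : Matrix (Fin (kv + 1)) (Fin (kv + 1)) ℝ)
    (Qyv : Matrix (Fin (lv + 1)) (Fin (lv + 1)) ℝ)
    (hQxw : Qxw + Qxwᵀ = 0) (hQxu : Qxu + Qxuᵀ = 0) (hQxv : Qxv + Qxvᵀ = 0)
    (hQyw : Qyw + Qywᵀ = -vecMulVec (e0v lw) (e0v lw))
    (hQyu : Qyu + Qyuᵀ = vecMulVec (eNv lu) (eNv lu))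
    (hQyv : Qyv + Qyvᵀ = vecMulVec (eNv lv) (eNv lv))
    (Iwu : Matrix (Fin (ku + 1)) (Fin (kw + 1)) ℝ)
    (Iwv : Matrix (Fin (kv + 1)) (Fin (kw + 1)) ℝ)
    (Iwu' : Matrix (Fin (kw + 1)) (Fin (ku + 1)) ℝ)
    (Iwv' : Matrix (Fin (kw + 1)) (Fin (kv + 1)) ℝ)
    (hIwu' : Iwu' = Pxw⁻¹ * Iwuᵀ * Pxu)
    (hIwv' : Iwv' = Pxw⁻¹ * Iwvᵀ * Pxv)
    (τw τuv : ℝ) (hτw : τw = -a2 / 2) (hτuv : τuv = a2 / 2) :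
    let Lww := a1 • ((Pxw⁻¹ * Qxw) ⊗ₖ (1 : Matrix (Fin (lw + 1)) (Fin (lw + 1)) ℝ))
      + a2 • ((1 : Matrix (Fin (kw + 1)) (Fin (kw + 1)) ℝ) ⊗ₖ (Pyw⁻¹ * Qyw))
      - τw • ((1 : Matrix (Fin (kw + 1)) (Fin (kw + 1)) ℝ)
          ⊗ₖ (Pyw⁻¹ * vecMulVec (e0v lw) (e0v lw)))
    let Luu := a1 • ((Pxu⁻¹ * Qxu) ⊗ₖ (1 : Matrix (Fin (lu + 1)) (Fin (lu + 1)) ℝ))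
      + a2 • ((1 : Matrix (Fin (ku + 1)) (Fin (ku + 1)) ℝ) ⊗ₖ (Pyu⁻¹ * Qyu))
      - τuv • ((1 : Matrix (Fin (ku + 1)) (Fin (ku + 1)) ℝ)
          ⊗ₖ (Pyu⁻¹ * vecMulVec (eNv lu) (eNv lu)))
    let Lvv := a1 • ((Pxv⁻¹ * Qxv) ⊗ₖ (1 : Matrix (Fin (lv + 1)) (Fin (lv + 1)) ℝ))
      + a2 • ((1 : Matrix (Fin (kv + 1)) (Fin (kv + 1)) ℝ) ⊗ₖ (Pyv⁻¹ * Qyv))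
      - τuv • ((1 : Matrix (Fin (kv + 1)) (Fin (kv + 1)) ℝ)
          ⊗ₖ (Pyv⁻¹ * vecMulVec (eNv lv) (eNv lv)))
    let Lwu := τw • (Iwu' ⊗ₖ (Pyw⁻¹ * vecMulVec (e0v lw) (eNv lu)))
    let Lwv := τw • (Iwv' ⊗ₖ (Pyw⁻¹ * vecMulVec (e0v lw) (eNv lv)))
    let Luw := τuv • (Iwu ⊗ₖ (Pyu⁻¹ * vecMulVec (eNv lu) (e0v lw)))
    let Lvw := τuv • (Iwv ⊗ₖ (Pyv⁻¹ * vecMulVec (eNv lv) (e0v lw)))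
    let L := Matrix.fromBlocks Lww (Matrix.fromCols Lwu Lwv)
      (Matrix.fromRows Luw Lvw) (Matrix.fromBlocks Luu 0 0 Lvv)
    let P := Matrix.fromBlocks (Pxw ⊗ₖ Pyw) 0 0
      (Matrix.fromBlocks (Pxu ⊗ₖ Pyu) 0 0 (Pxv ⊗ₖ Pyv))
    P * L + Lᵀ * P = 0 :=
  sbp_fd_junction_advection_skew_symmetry_general kw lw ku lu kv lv a1 a2 Pxw Pyw Pxu Pyu Pxv Pyv
    hPxwP hPywP hPxuP hPyuP hPxvP hPyvP Qxw Qyw Qxu Qyu Qxv Qyv hQxw hQxu hQxv hQyw hQyu hQyv Iwu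
    Iwv Iwu' Iwv' hIwu' hIwv' τw τuv hτw hτuv

end
end
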